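/- Let S ⊆ ℝ^d be finite with |S| > 3 and let s₀ ∈ S satisfy s₀ ∈ conv(S \ {s₀}) (s₀ is not an extreme point of S). Then there exists an AP-free finite colouring of ℝ^d containing no almost-monochromatic similar copy of (S, s₀). -/

import Mathlib

/-!
Work with the sup norm. Give the unit ball one colour; outside it, cut space into shells
`(1 + β) ^ j ≤ ‖x‖ < (1 + β) ^ (j + 1)`, and each shell into cells by the face of the cube
containing the direction of `x` and a grid of mesh `β` on that face. A point is coloured by its
shell index mod `Q + 1` and its cell data, the grid coordinates taken mod `A + 1`. On a cell the
sup norm is the linear function `± x i`, so cells are convex, and a cell in shell `j` has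
diameter `O(β (1 + β) ^ j)`.

An arithmetic progression eventually steps through two consecutive shells, which have different
colours. A monochromatic similar copy `T` of `S \ {s₀}` has all distances within a fixed factor `K`
of each other. If `T` met two shells, these would differ by at least `Q + 1`, so a point of the
top shell is far from the lower points compared with the distance between two points of `T` that
share a cell or both lie low; among three points one such pair exists. Hence `T` lies in a single
cell, and with it every point of its convex hull, in particular the image of `s₀`.
-/

/-- A similarity of `ℝ^d`: a map scaling all distances by some ratio `r > 0`. -/
def IsSim {d : ℕ} (f : EuclideanSpace ℝ (Fin d) → EuclideanSpace ℝ (Fin d)) : Prop :=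
  ∃ r : ℝ, 0 < r ∧ ∀ x y, dist (f x) (f y) = r * dist x y

/-- A colouring of `ℝ^d` is AP-free if no infinite arithmetic progression
`{a + n • v : n ∈ ℕ}` with `v ≠ 0` is monochromatic. -/
def APFree {d k : ℕ} (φ : EuclideanSpace ℝ (Fin d) → Fin k) : Prop :=
  ¬ ∃ (a v : EuclideanSpace ℝ (Fin d)) (c : Fin k), v ≠ 0 ∧
      ∀ n : ℕ, φ (a + (n : ℝ) • v) = c

/-- The pair `(S, s₀)` is almost-monochromatic under `φ`. -/
def AlmostMono {X : Type*} {k : ℕ} (φ : X → Fin k) (S : Set X) (s₀ : X) : Prop :=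
  (∃ c, ∀ x ∈ S \ {s₀}, φ x = c) ∧ ¬ ∃ c, ∀ x ∈ S, φ x = c

open Set

section Spread

variable {X Y : Type*} [MetricSpace X] [MetricSpace Y]

def HasSpreadAtMost (K : ℝ) (T : Set X) : Prop :=
  ∀ t ∈ T, ∀ t' ∈ T, ∀ u ∈ T, ∀ u' ∈ T, t ≠ t' → dist u u' ≤ K * dist t t'

theorem Set.Finite.exists_hasSpreadAtMost {T : Set X} (hT : T.Finite) :
    ∃ K, HasSpreadAtMost K T := by
  obtain ⟨K, hK⟩ := (((hT.prod hT).prod (hT.prod hT)).image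
    fun q : (X × X) × X × X => dist q.2.1 q.2.2 / dist q.1.1 q.1.2).bddAbove
  refine ⟨K, fun t ht t' ht' u hu u' hu' hne => ?_⟩
  have := hK ⟨((t, t'), (u, u')), ⟨⟨ht, ht'⟩, hu, hu'⟩, rfl⟩
  rwa [div_le_iff₀ (dist_pos.2 hne)] at this

variable {K : ℝ} {T : Set X}

theorem HasSpreadAtMost.mono {T' : Set X} (h : HasSpreadAtMost K T) (hT' : T' ⊆ T) :
    HasSpreadAtMost K T' :=
  fun t ht t' ht' u hu u' hu' => h t (hT' ht) t' (hT' ht') u (hT' hu) u' (hT' hu')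

theorem HasSpreadAtMost.one_le (h : HasSpreadAtMost K T) {t t' : X} (ht : t ∈ T) (ht' : t' ∈ T)
    (hne : t ≠ t') : 1 ≤ K := by
  have hpos := dist_pos.2 hne
  have := h t ht t' ht' t ht t' ht' hne
  nlinarith

theorem HasSpreadAtMost.image (h : HasSpreadAtMost K T) {f : X → Y} {a b : ℝ}
    (hb : ∀ x y, dist (f x) (f y) ≤ b * dist x y) (ha : ∀ x y, dist x y ≤ a * dist (f x) (f y)) :
    HasSpreadAtMost (b * K * a) (f '' T) := by
  rintro _ ⟨t, ht, rfl⟩ _ ⟨t', ht', rfl⟩ _ ⟨u, hu, rfl⟩ _ ⟨u', hu', rfl⟩ hne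
  have htt' : t ≠ t' := fun h => hne (h ▸ rfl)
  have hK := h.one_le ht ht' htt'
  have hb₀ : 0 ≤ b := by
    have := hb t t'
    nlinarith [dist_pos.2 hne, dist_pos.2 htt']
  calc dist (f u) (f u') ≤ b * dist u u' := hb u u'
    _ ≤ b * (K * (a * dist (f t) (f t'))) := by
      gcongr
      exact (h t ht t' ht' u hu u' hu' htt').trans (by gcongr; exact ha t t')
    _ = b * K * a * dist (f t) (f t') := by ring

end Spread

section Similarity

variable {d : ℕ} {f : EuclideanSpace ℝ (Fin d) → EuclideanSpace ℝ (Fin d)}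

theorem IsSim.injective (hf : IsSim f) : Function.Injective f := by
  obtain ⟨r, hr, hd⟩ := hf
  intro x y hxy
  simpa [hxy, hr.ne'] using hd x y

theorem IsSim.exists_affineMap (hf : IsSim f) :
    ∃ F : EuclideanSpace ℝ (Fin d) →ᵃ[ℝ] EuclideanSpace ℝ (Fin d), ⇑F = f := by
  obtain ⟨r, hr, hd⟩ := hf
  have hiso : Isometry fun x => r⁻¹ • f x := Isometry.of_dist_eq fun x y => by
    rw [dist_smul₀, hd, Real.norm_of_nonneg (inv_nonneg.2 hr.le), inv_mul_cancel_left₀ hr.ne']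
  refine ⟨(AffineMap.homothety 0 r).comp hiso.affineIsometryOfStrictConvexSpace.toAffineMap, ?_⟩
  funext x
  simp [AffineMap.homothety_apply, smul_smul, mul_inv_cancel₀ hr.ne']

theorem IsSim.mem_convexHull_image (hf : IsSim f) {P : Set (EuclideanSpace ℝ (Fin d))}
    {z : EuclideanSpace ℝ (Fin d)} (hz : z ∈ convexHull ℝ P) : f z ∈ convexHull ℝ (f '' P) := by
  obtain ⟨F, rfl⟩ := hf.exists_affineMap
  rw [← AffineMap.image_convexHull]
  exact mem_image_of_mem F hz

theorem HasSpreadAtMost.image_of_isSim (hf : IsSim f) {K : ℝ} {T : Set (EuclideanSpace ℝ (Fin d))}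
    (h : HasSpreadAtMost K T) : HasSpreadAtMost K (f '' T) := by
  obtain ⟨r, hr, hd⟩ := hf
  have := h.image (b := r) (a := r⁻¹) (fun x y => (hd x y).le)
    fun x y => by rw [hd, inv_mul_cancel_left₀ hr.ne']
  rwa [mul_right_comm, mul_inv_cancel₀ hr.ne', one_mul] at this

end Similarity

theorem exists_ne_iff_of_two_lt_ncard {α : Type*} {T : Set α} (hT : T.Finite) (h3 : 2 < T.ncard)
    (P : α → Prop) : ∃ x ∈ T, ∃ y ∈ T, x ≠ y ∧ (P x ↔ P y) := by
  obtain ⟨a, b, c, ha, hb, hc, hab, hac, hbc⟩ := (two_lt_ncard_iff hT).1 h3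
  by_cases hPab : P a ↔ P b
  · exact ⟨a, ha, b, hb, hab, hPab⟩
  by_cases hPac : P a ↔ P c
  · exact ⟨a, ha, c, hc, hac, hPac⟩
  exact ⟨b, hb, c, hc, hbc, by tauto⟩

theorem add_le_of_natCast_eq_of_lt {m j j' : ℕ} (h : (j : ZMod m) = j') (hlt : j < j') :
    j + m ≤ j' := by
  have hdvd : (m : ℤ) ∣ (j' : ℤ) - j :=
    (ZMod.intCast_eq_intCast_iff_dvd_sub j j' m).1 (by simpa using h)
  have := Int.le_of_dvd (by omega) hdvd
  omega

theorem eq_of_intCast_eq_of_abs_sub_lt {m : ℕ} {a b : ℤ} (h : (a : ZMod m) = b)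
    (hlt : |a - b| < m) : a = b := by
  have hdvd : (m : ℤ) ∣ a - b := by
    rw [← dvd_neg, neg_sub]; exact (ZMod.intCast_eq_intCast_iff_dvd_sub a b m).1 h
  exact sub_eq_zero.1 (Int.eq_zero_of_abs_lt_dvd hdvd hlt)

theorem exists_le_lt_add_of_succ_le_add {g : ℕ → ℝ} {δ X : ℝ} (hstep : ∀ n, g (n + 1) ≤ g n + δ)
    (h0 : g 0 < X) (hX : ∃ n, X ≤ g n) : ∃ n, X ≤ g n ∧ g n < X + δ := by
  classical
  obtain ⟨m, hm⟩ : ∃ m, Nat.find hX = m + 1 :=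
    Nat.exists_eq_succ_of_ne_zero fun h => (h ▸ Nat.find_spec hX).not_gt h0
  refine ⟨m + 1, hm ▸ Nat.find_spec hX, ?_⟩
  have := Nat.find_min hX (by rw [hm]; exact m.lt_succ_self)
  linarith [hstep m, not_le.1 this]

theorem mul_add_mul_lt_of_add_eq_one {u v p q p' q' : ℝ} (hu : 0 ≤ u) (hv : 0 ≤ v) (huv : u + v = 1)
    (hp : p < p') (hq : q < q') : u * p + v * q < u * p' + v * q' := by
  rcases hu.eq_or_lt with rfl | hu
  · simp_all
  · nlinarith

section Shell

variable {E : Type*} {β : ℝ}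

noncomputable def shell [Norm E] (β : ℝ) (x : E) : ℕ := ⌊Real.logb (1 + β) ‖x‖⌋₊

theorem shell_eq_iff [Norm E] (hβ : 0 < β) {x : E} (hx : 1 ≤ ‖x‖) {j : ℕ} :
    shell β x = j ↔ (1 + β) ^ j ≤ ‖x‖ ∧ ‖x‖ < (1 + β) ^ (j + 1) := by
  have hb : 1 < 1 + β := by linarith
  rw [shell, Nat.floor_eq_iff (Real.logb_nonneg hb hx), Real.le_logb_iff_rpow_le hb (by linarith),
    Real.logb_lt_iff_lt_rpow hb (by linarith)]
  norm_cast

variable [NormedAddCommGroup E] [NormedSpace ℝ E]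

theorem exists_le_norm_add_smul {a v : E} (hv : v ≠ 0) (X : ℝ) :
    ∃ n : ℕ, X ≤ ‖a + (n : ℝ) • v‖ := by
  obtain ⟨n, hn⟩ := exists_nat_ge ((X + ‖a‖) / ‖v‖)
  refine ⟨n, ?_⟩
  have h₁ : X + ‖a‖ ≤ n * ‖v‖ := (div_le_iff₀ (norm_pos_iff.2 hv)).1 hn
  have h₂ : ‖(n : ℝ) • v‖ ≤ ‖a + (n : ℝ) • v‖ + ‖a‖ := by
    simpa using norm_sub_le (a + (n : ℝ) • v) a
  rw [norm_smul, Real.norm_natCast] at h₂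
  linarith

theorem exists_shell_eq_add_smul (hβ : 0 < β) {a v : E} (hv : v ≠ 0) {j : ℕ}
    (ha : ‖a‖ < (1 + β) ^ j) (hvj : ‖v‖ ≤ β * (1 + β) ^ j) :
    ∃ n : ℕ, 1 ≤ ‖a + (n : ℝ) • v‖ ∧ shell β (a + (n : ℝ) • v) = j := by
  have hstep (n : ℕ) : ‖a + ((n + 1 : ℕ) : ℝ) • v‖ ≤ ‖a + (n : ℝ) • v‖ + ‖v‖ := by
    rw [Nat.cast_succ, add_smul, one_smul, ← add_assoc]
    exact norm_add_le _ _
  obtain ⟨n, hn₁, hn₂⟩ := exists_le_lt_add_of_succ_le_add hstep (by simpa using ha)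
    (exists_le_norm_add_smul hv _)
  have hn : 1 ≤ ‖a + (n : ℝ) • v‖ := (one_le_pow₀ (by linarith)).trans hn₁
  refine ⟨n, hn, (shell_eq_iff hβ hn).2 ⟨hn₁, ?_⟩⟩
  rw [pow_succ]
  linarith

end Shell

/-- Admissible mesh `β`, shell period `Q + 1` and grid period `A + 1` for colouring against
copies of spread at most `K`. -/
structure GridParams (K β : ℝ) (Q A : ℕ) : Prop where
  pos : 0 < β
  grid : 2 / β ≤ A
  gap_two : 2 ≤ (1 + β) ^ Q
  gap_spread : 4 * K ≤ (1 + β) ^ Q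
  fine : 4 * K * β * (1 + β) ≤ 1

theorem GridParams.period_pos {K β : ℝ} {Q A : ℕ} (hp : GridParams K β Q A) : 0 < Q := by
  refine Nat.pos_of_ne_zero fun hQ => ?_
  have := hp.gap_two
  rw [hQ, pow_zero] at this
  norm_num at this

theorem exists_gridParams (K : ℝ) : ∃ β Q A, GridParams K β Q A := by
  set β := 1 / (8 * (|K| + 1))
  have hβ : 0 < β := by positivity
  have hβK : 8 * (|K| + 1) * β = 1 := mul_one_div_cancel (by positivity)
  have hβ₁ : β ≤ 1 := by nlinarith [abs_nonneg K]
  obtain ⟨Q, hQ⟩ := pow_unbounded_of_one_lt (max 2 (4 * K)) (by linarith : 1 < 1 + β)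
  refine ⟨β, Q, ⌈2 / β⌉₊, hβ, Nat.le_ceil _, (le_max_left _ _).trans hQ.le,
    (le_max_right _ _).trans hQ.le, ?_⟩
  have h₁ : K * (β * (1 + β)) ≤ |K| * (β * (1 + β)) :=
    mul_le_mul_of_nonneg_right (le_abs_self K) (by positivity)
  have h₂ : |K| * (β * (1 + β)) ≤ |K| * (2 * β) :=
    mul_le_mul_of_nonneg_left (by nlinarith) (abs_nonneg K)
  nlinarith

section SupNormGrid

open Finset

variable {ι : Type*} [Fintype ι] {β : ℝ} {x y : ι → ℝ}

theorem abs_le_pi_norm (x : ι → ℝ) (l : ι) : |x l| ≤ ‖x‖ := by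
  simpa using norm_le_pi_norm x l

noncomputable def gridIndex (β : ℝ) (x : ι → ℝ) (l : ι) : ℤ := ⌊x l / (β * ‖x‖)⌋

theorem gridIndex_eq_iff (hβ : 0 < β) (hx : 0 < ‖x‖) {l : ι} {a : ℤ} :
    gridIndex β x l = a ↔ a * (β * ‖x‖) ≤ x l ∧ x l < (a + 1) * (β * ‖x‖) := by
  rw [gridIndex, Int.floor_eq_iff, le_div_iff₀ (mul_pos hβ hx), div_lt_iff₀ (mul_pos hβ hx)]

theorem gridIndex_mem_Ioc (hβ : 0 < β) (hx : 0 < ‖x‖) (l : ι) :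
    (gridIndex β x l : ℝ) ∈ Ioc (-(1 / β) - 1) (1 / β) := by
  have ht : |x l / (β * ‖x‖)| ≤ 1 / β := by
    rw [abs_div, abs_of_pos (mul_pos hβ hx), div_le_div_iff₀ (mul_pos hβ hx) hβ]
    nlinarith [abs_le_pi_norm x l]
  have h₁ := Int.floor_le (x l / (β * ‖x‖))
  have h₂ := Int.sub_one_lt_floor (x l / (β * ‖x‖))
  rw [abs_le] at ht
  exact ⟨by unfold gridIndex; linarith, by unfold gridIndex; linarith⟩

theorem exists_abs_eq_norm [Nonempty ι] (x : ι → ℝ) : ∃ i, |x i| = ‖x‖ := by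
  obtain ⟨i, -, hi⟩ := exists_max_image univ (fun i => |x i|) univ_nonempty
  refine ⟨i, le_antisymm (abs_le_pi_norm x i) ?_⟩
  exact (pi_norm_le_iff_of_nonneg (abs_nonneg _)).2 fun j => by simpa using hi j (mem_univ j)

variable [LinearOrder ι] [Nonempty ι]

/-- Taking the least index of a maximal coordinate (rather than an arbitrary one) is what makes
the cells `{x | cellKey β x = k}` convex. -/
noncomputable def face (x : ι → ℝ) : ι :=
  (univ.filter fun i => |x i| = ‖x‖).min'
    (by simpa [filter_nonempty_iff] using exists_abs_eq_norm x)

theorem abs_face (x : ι → ℝ) : |x (face x)| = ‖x‖ :=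
  (mem_filter.1 (min'_mem (univ.filter fun i => |x i| = ‖x‖) _)).2

theorem abs_lt_norm_of_lt_face {l : ι} (hl : l < face x) : |x l| < ‖x‖ :=
  (abs_le_pi_norm x l).lt_of_ne fun h =>
    (min'_le _ l (mem_filter.2 ⟨mem_univ l, h⟩)).not_gt hl

theorem face_eq_of {i : ι} (hi : |x i| = ‖x‖) (hlt : ∀ l < i, |x l| < ‖x‖) : face x = i :=
  le_antisymm (min'_le _ i (mem_filter.2 ⟨mem_univ i, hi⟩))
    (le_min' _ _ _ fun l hl => not_lt.1 fun h => (hlt l h).ne (mem_filter.1 hl).2)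

noncomputable def cellKey (β : ℝ) (x : ι → ℝ) : ℕ × ι × SignType × (ι → ℤ) :=
  (shell β x, face x, SignType.sign (x (face x)), gridIndex β x)

noncomputable def colour (β : ℝ) (Q A : ℕ) (x : ι → ℝ) :
    Option (ZMod (Q + 1) × ι × SignType × (ι → ZMod (A + 1))) :=
  if ‖x‖ < 1 then none
  else some (shell β x, face x, SignType.sign (x (face x)),
    fun l => (gridIndex β x l : ZMod (A + 1)))

variable {Q A : ℕ}

theorem colour_eq_none_iff : colour β Q A x = none ↔ ‖x‖ < 1 := by
  unfold colour; split_ifs with h <;> simp [h]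

theorem shell_cast_eq_of_colour_eq (hx : 1 ≤ ‖x‖) (hy : 1 ≤ ‖y‖)
    (h : colour β Q A x = colour β Q A y) : (shell β x : ZMod (Q + 1)) = shell β y := by
  simp only [colour, if_neg (not_lt.2 hx), if_neg (not_lt.2 hy), Option.some.injEq,
    Prod.mk.injEq] at h
  exact h.1

theorem cellKey_eq_of_colour_eq (hβ : 0 < β) (hA : 2 / β ≤ A) (hx : 1 ≤ ‖x‖) (hy : 1 ≤ ‖y‖)
    (hshell : shell β x = shell β y) (h : colour β Q A x = colour β Q A y) :
    cellKey β x = cellKey β y := by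
  simp only [colour, if_neg (not_lt.2 hx), if_neg (not_lt.2 hy), Option.some.injEq,
    Prod.mk.injEq] at h
  obtain ⟨-, hface, hsign, hgrid⟩ := h
  refine Prod.ext hshell (Prod.ext hface (Prod.ext hsign (funext fun l => ?_)))
  refine eq_of_intCast_eq_of_abs_sub_lt (congrFun hgrid l) ?_
  obtain ⟨hx₁, hx₂⟩ := gridIndex_mem_Ioc hβ (by linarith) (x := x) l
  obtain ⟨hy₁, hy₂⟩ := gridIndex_mem_Ioc hβ (by linarith) (x := y) l
  have : |((gridIndex β x l - gridIndex β y l : ℤ) : ℝ)| < ((A + 1 : ℕ) : ℝ) := by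
    push_cast
    rw [abs_sub_lt_iff]
    constructor <;> linarith [(by ring : 1 / β + 1 / β = 2 / β)]
  exact_mod_cast this

theorem norm_smul_add_smul_eq_of_face_eq (hx₀ : 0 < ‖x‖) (hface : face y = face x)
    (hsign : SignType.sign (y (face y)) = SignType.sign (x (face x))) {u v : ℝ} (hu : 0 ≤ u)
    (hv : 0 ≤ v) : ‖u • x + v • y‖ = u * ‖x‖ + v * ‖y‖ ∧
      |(u • x + v • y) (face x)| = ‖u • x + v • y‖ ∧
      (u • x + v • y) (face x) = SignType.sign (x (face x)) * ‖u • x + v • y‖ := by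
  set σ : ℝ := ((SignType.sign (x (face x)) : SignType) : ℝ) with hσ
  have hx : x (face x) = σ * ‖x‖ := by rw [← abs_face x]; exact (sign_mul_abs _).symm
  have hy : y (face x) = σ * ‖y‖ := by
    rw [← hface, ← abs_face y, hσ, ← hsign]; exact (sign_mul_abs _).symm
  have hσ₁ : |σ| = 1 := by
    have := abs_face x
    rw [hx, abs_mul, abs_norm] at this
    exact (mul_eq_right₀ hx₀.ne').1 this
  have hz : (u • x + v • y) (face x) = σ * (u * ‖x‖ + v * ‖y‖) := by
    simp only [Pi.add_apply, Pi.smul_apply, smul_eq_mul, hx, hy]; ring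
  have hle : ‖u • x + v • y‖ ≤ u * ‖x‖ + v * ‖y‖ := by
    simpa [norm_smul, abs_of_nonneg hu, abs_of_nonneg hv] using norm_add_le (u • x) (v • y)
  have hge : u * ‖x‖ + v * ‖y‖ ≤ ‖u • x + v • y‖ := by
    calc u * ‖x‖ + v * ‖y‖ = |(u • x + v • y) (face x)| := by
          rw [hz, abs_mul, hσ₁, one_mul, abs_of_nonneg (by positivity)]
      _ ≤ ‖u • x + v • y‖ := abs_le_pi_norm _ _
  have heq := le_antisymm hle hge
  refine ⟨heq, ?_, by rw [hz, heq]⟩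
  rw [hz, abs_mul, hσ₁, one_mul, abs_of_nonneg (by positivity), heq]

theorem convex_cell (hβ : 0 < β) (k : ℕ × ι × SignType × (ι → ℤ)) :
    Convex ℝ {x : ι → ℝ | 1 ≤ ‖x‖ ∧ cellKey β x = k} := by
  rintro x ⟨hx, rfl⟩ y ⟨hy, hxy⟩ u v hu hv huv
  simp only [cellKey, Prod.mk.injEq] at hxy
  obtain ⟨hshell, hface, hsign, hgrid⟩ := hxy
  obtain ⟨hz, hzface, hzsign⟩ := norm_smul_add_smul_eq_of_face_eq (by linarith) hface hsign hu hv
  set z := u • x + v • y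
  have hz₁ : 1 ≤ ‖z‖ := by rw [hz]; nlinarith
  have hzl (l : ι) : z l = u * x l + v * y l := rfl
  have habs (l : ι) : |z l| ≤ u * |x l| + v * |y l| := by
    calc |z l| ≤ |u * x l| + |v * y l| := hzl l ▸ abs_add_le _ _
      _ = u * |x l| + v * |y l| := by rw [abs_mul, abs_mul, abs_of_nonneg hu, abs_of_nonneg hv]
  refine ⟨hz₁, ?_⟩
  obtain ⟨hx₁, hx₂⟩ := (shell_eq_iff hβ hx).1 rfl
  obtain ⟨hy₁, hy₂⟩ := (shell_eq_iff hβ hy).1 hshell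
  have hzf : face z = face x := face_eq_of hzface fun l hl => by
    rw [hz]
    exact (habs l).trans_lt (mul_add_mul_lt_of_add_eq_one hu hv huv (abs_lt_norm_of_lt_face hl)
      (abs_lt_norm_of_lt_face (hface ▸ hl)))
  simp only [cellKey, Prod.mk.injEq]
  refine ⟨?_, hzf, ?_, funext fun l => ?_⟩
  · refine (shell_eq_iff hβ hz₁).2 ⟨?_, ?_⟩ <;> rw [hz]
    · nlinarith
    · simpa [← add_mul, huv] using mul_add_mul_lt_of_add_eq_one hu hv huv hx₂ hy₂
  · have hxσ : x (face x) = SignType.sign (x (face x)) * ‖x‖ := by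
      rw [← abs_face x]; exact (sign_mul_abs _).symm
    rw [hzf, hzsign, sign_mul, sign_pos (show 0 < ‖z‖ by linarith), mul_one]
    conv_rhs => rw [hxσ, sign_mul, sign_pos (show 0 < ‖x‖ by linarith), mul_one]
  · obtain ⟨hxl₁, hxl₂⟩ := (gridIndex_eq_iff hβ (by linarith) (x := x) (l := l)).1 rfl
    obtain ⟨hyl₁, hyl₂⟩ :=
      (gridIndex_eq_iff hβ (by linarith) (x := y) (l := l)).1 (congrFun hgrid l)
    refine (gridIndex_eq_iff hβ (by linarith)).2 ⟨?_, ?_⟩ <;> rw [hz, hzl]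
    · nlinarith
    · have := mul_add_mul_lt_of_add_eq_one hu hv huv hxl₂ hyl₂
      linarith

theorem norm_sub_lt_of_cellKey_eq (hβ : 0 < β) (hx : 1 ≤ ‖x‖) (hy : 1 ≤ ‖y‖)
    (h : cellKey β x = cellKey β y) : ‖x - y‖ < 2 * β * (1 + β) ^ (shell β x + 1) := by
  simp only [cellKey, Prod.mk.injEq] at h
  obtain ⟨hshell, -, -, hgrid⟩ := h
  obtain ⟨hx₁, hx₂⟩ := (shell_eq_iff hβ hx).1 rfl
  obtain ⟨hy₁, hy₂⟩ := (shell_eq_iff hβ hy).1 hshell.symm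
  set b := (1 + β) ^ shell β x
  have hb : (1 + β) ^ (shell β x + 1) = b + β * b := by rw [pow_succ]; ring
  refine (pi_norm_lt_iff (by positivity)).2 fun l => ?_
  have hl := Int.abs_sub_lt_one_of_floor_eq_floor (congrFun hgrid l)
  have hyl : |y l / ‖y‖| ≤ 1 := by
    rw [abs_div, abs_norm, div_le_one (by linarith)]; exact abs_le_pi_norm y l
  have key : x l - y l = β * ‖x‖ * (x l / (β * ‖x‖) - y l / (β * ‖y‖))
      + (‖x‖ - ‖y‖) * (y l / ‖y‖) := by
    field_simp
    ring
  rw [Real.norm_eq_abs, Pi.sub_apply, key]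
  have hA : |β * ‖x‖ * (x l / (β * ‖x‖) - y l / (β * ‖y‖))| < β * ‖x‖ := by
    rw [abs_mul, abs_of_pos (mul_pos hβ (by linarith))]
    exact mul_lt_of_lt_one_right (mul_pos hβ (by linarith)) hl
  have hB : |(‖x‖ - ‖y‖) * (y l / ‖y‖)| ≤ β * b := by
    rw [abs_mul]
    refine (mul_le_of_le_one_right (abs_nonneg _) hyl).trans ?_
    rw [abs_sub_le_iff]
    constructor <;> linarith
  calc _ ≤ _ := abs_add_le _ _
    _ < β * ‖x‖ + β * b := add_lt_add_of_lt_of_le hA hB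
    _ ≤ 2 * β * (1 + β) ^ (shell β x + 1) := by nlinarith

theorem colour_eq_of_cellKey_eq (hx : 1 ≤ ‖x‖) (hy : 1 ≤ ‖y‖)
    (h : cellKey β x = cellKey β y) : colour β Q A x = colour β Q A y := by
  simp only [cellKey, Prod.mk.injEq] at h
  obtain ⟨h₁, h₂, h₃, h₄⟩ := h
  rw [h₂] at h₃
  simp only [colour, if_neg (not_lt.2 hx), if_neg (not_lt.2 hy), h₁, h₂, h₃, h₄]

theorem not_forall_colour_add_smul_eq (hβ : 0 < β) (hQ : 0 < Q) {a v : ι → ℝ}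
    (hv : v ≠ 0) (c₀ : Option (ZMod (Q + 1) × ι × SignType × (ι → ZMod (A + 1)))) :
    ¬ ∀ n : ℕ, colour β Q A (a + (n : ℝ) • v) = c₀ := by
  intro h
  have hb : 1 < 1 + β := by linarith
  obtain ⟨j, hj⟩ := pow_unbounded_of_one_lt (max ‖a‖ (‖v‖ / β)) hb
  have hshell (i : ℕ) (hi : j ≤ i) :
      ∃ n : ℕ, 1 ≤ ‖a + (n : ℝ) • v‖ ∧ shell β (a + (n : ℝ) • v) = i := by
    have hji : (1 + β) ^ j ≤ (1 + β) ^ i := pow_le_pow_right₀ hb.le hi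
    refine exists_shell_eq_add_smul hβ hv ?_ ?_
    · linarith [le_max_left ‖a‖ (‖v‖ / β)]
    · have := (div_lt_iff₀ hβ).1 ((le_max_right ‖a‖ (‖v‖ / β)).trans_lt hj)
      nlinarith
  obtain ⟨n₁, h₁, hs₁⟩ := hshell j le_rfl
  obtain ⟨n₂, h₂, hs₂⟩ := hshell (j + 1) j.le_succ
  have := shell_cast_eq_of_colour_eq h₁ h₂ ((h n₁).trans (h n₂).symm)
  rw [hs₁, hs₂] at this
  have := add_le_of_natCast_eq_of_lt this j.lt_succ_self
  omega

theorem norm_mul_pow_lt_of_colour_eq (hβ : 0 < β) (hx : 1 ≤ ‖x‖) (hy : 1 ≤ ‖y‖)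
    (h : colour β Q A x = colour β Q A y) (hlt : shell β x < shell β y) :
    ‖x‖ * (1 + β) ^ Q < (1 + β) ^ shell β y := by
  have hgap := add_le_of_natCast_eq_of_lt (shell_cast_eq_of_colour_eq hx hy h) hlt
  calc ‖x‖ * (1 + β) ^ Q < (1 + β) ^ (shell β x + 1) * (1 + β) ^ Q := by
        gcongr; exact ((shell_eq_iff hβ hx).1 rfl).2
    _ = (1 + β) ^ (shell β x + 1 + Q) := (pow_add _ _ _).symm
    _ ≤ (1 + β) ^ shell β y := pow_le_pow_right₀ (by linarith) (by omega)

variable {K : ℝ} {T : Set (ι → ℝ)}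

theorem shell_eq_of_colour_eq (hp : GridParams K β Q A) (hT : T.Finite) (h3 : 2 < T.ncard)
    (hK : HasSpreadAtMost K T) (h1 : ∀ t ∈ T, 1 ≤ ‖t‖) {c₀} (hc : ∀ t ∈ T, colour β Q A t = c₀)
    {t t' : ι → ℝ} (ht : t ∈ T) (ht' : t' ∈ T) : shell β t = shell β t' := by
  have hβ := hp.pos
  obtain ⟨w, hw, hwmax⟩ := T.exists_max_image (shell β) hT ⟨t, ht⟩
  set J := shell β w
  set D := (1 + β) ^ J
  set B := (1 + β) ^ Q
  have hlow (ℓ : ι → ℝ) (hℓ : ℓ ∈ T) (hne : shell β ℓ ≠ J) : ‖ℓ‖ * B < D :=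
    norm_mul_pow_lt_of_colour_eq hβ (h1 ℓ hℓ) (h1 w hw) ((hc ℓ hℓ).trans (hc w hw).symm)
      ((hwmax ℓ hℓ).lt_of_ne hne)
  have hD : D ≤ ‖w‖ := ((shell_eq_iff hβ (h1 w hw)).1 rfl).1
  by_contra hne
  obtain ⟨ℓ, hℓ, hℓJ⟩ : ∃ ℓ ∈ T, shell β ℓ ≠ J := by
    by_cases h : shell β t = J
    · exact ⟨t', ht', fun h' => hne (h.trans h'.symm)⟩
    · exact ⟨t, ht, h⟩
  have hfar : D ≤ 2 * dist w ℓ := by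
    have hℓ' := hlow ℓ hℓ hℓJ
    have : ‖w‖ - ‖ℓ‖ ≤ dist w ℓ := by rw [dist_eq_norm]; exact norm_sub_norm_le w ℓ
    nlinarith [mul_le_mul_of_nonneg_left hp.gap_two (norm_nonneg ℓ)]
  obtain ⟨x, hx, y, hy, hxy, hJ⟩ := exists_ne_iff_of_two_lt_ncard hT h3 (fun t => shell β t = J)
  have hK₁ : 1 ≤ K := hK.one_le hx hy hxy
  have hclose : 2 * K * dist x y < D := by
    rw [dist_eq_norm]
    by_cases hxJ : shell β x = J
    · have hkey := cellKey_eq_of_colour_eq hβ hp.grid (h1 x hx) (h1 y hy)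
        (hxJ.trans (hJ.1 hxJ).symm) ((hc x hx).trans (hc y hy).symm)
      have := norm_sub_lt_of_cellKey_eq hβ (h1 x hx) (h1 y hy) hkey
      rw [hxJ, pow_succ] at this
      calc 2 * K * ‖x - y‖ < 2 * K * (2 * β * (D * (1 + β))) :=
            mul_lt_mul_of_pos_left this (by linarith)
        _ = (4 * K * β * (1 + β)) * D := by ring
        _ ≤ D := mul_le_of_le_one_left (by positivity) hp.fine
    · have hx' := hlow x hx hxJ
      have hy' := hlow y hy fun h => hxJ (hJ.2 h)
      have := mul_le_mul_of_nonneg_right hp.gap_spread (add_nonneg (norm_nonneg x) (norm_nonneg y))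
      calc 2 * K * ‖x - y‖ ≤ 2 * K * (‖x‖ + ‖y‖) := by gcongr; exact norm_sub_le x y
        _ < D := by linarith
  linarith [hK x hx y hy w hw ℓ hℓ hxy]

theorem colour_eq_of_mem_convexHull (hp : GridParams K β Q A) (hT : T.Finite) (h3 : 2 < T.ncard)
    (hK : HasSpreadAtMost K T) {c₀} (hc : ∀ t ∈ T, colour β Q A t = c₀) {z : ι → ℝ}
    (hz : z ∈ convexHull ℝ T) : colour β Q A z = c₀ := by
  obtain ⟨t₀, ht₀⟩ := nonempty_of_ncard_ne_zero (by omega : T.ncard ≠ 0)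
  by_cases hsmall : ‖t₀‖ < 1
  · have hc₀ : c₀ = none := (hc t₀ ht₀).symm.trans (colour_eq_none_iff.2 hsmall)
    have hball : T ⊆ Metric.ball 0 1 := fun t ht =>
      mem_ball_zero_iff.2 (colour_eq_none_iff.1 ((hc t ht).trans hc₀))
    rw [hc₀, colour_eq_none_iff, ← mem_ball_zero_iff]
    exact convexHull_min hball (convex_ball 0 1) hz
  · have h1 : ∀ t ∈ T, 1 ≤ ‖t‖ := fun t ht => not_lt.1 fun h => hsmall <|
      colour_eq_none_iff.1 ((hc t₀ ht₀).trans ((hc t ht).symm.trans (colour_eq_none_iff.2 h)))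
    have hcell : T ⊆ {x | 1 ≤ ‖x‖ ∧ cellKey β x = cellKey β t₀} := fun t ht =>
      ⟨h1 t ht, cellKey_eq_of_colour_eq hp.pos hp.grid (h1 t ht) (h1 t₀ ht₀)
        (shell_eq_of_colour_eq hp hT h3 hK h1 hc ht ht₀) ((hc t ht).trans (hc t₀ ht₀).symm)⟩
    obtain ⟨hz₁, hzk⟩ := convexHull_min hcell (convex_cell hp.pos _) hz
    rw [← hc t₀ ht₀]
    exact colour_eq_of_cellKey_eq hz₁ (h1 t₀ ht₀) hzk

end SupNormGrid

theorem exists_apFree_colour_eq_of_mem_convexHull (d : ℕ) (K : ℝ) :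
    ∃ (k : ℕ) (φ : EuclideanSpace ℝ (Fin d) → Fin k), APFree φ ∧
      ∀ T : Set (EuclideanSpace ℝ (Fin d)), T.Finite → 2 < T.ncard → HasSpreadAtMost K T →
        ∀ c, (∀ t ∈ T, φ t = c) → ∀ z ∈ convexHull ℝ T, φ z = c := by
  rcases isEmpty_or_nonempty (Fin d) with hd | hd
  · refine ⟨1, fun _ => 0, fun ⟨a, v, c, hv, _⟩ => hv (Subsingleton.elim v 0), ?_⟩
    intro T _ h3
    have := T.ncard_le_one_of_subsingleton
    omega
  obtain ⟨C, hC⟩ : ∃ C, AntilipschitzWith C (WithLp.ofLp : EuclideanSpace ℝ (Fin d) → _) :=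
    ⟨_, PiLp.antilipschitzWith_ofLp 2 _⟩
  obtain ⟨β, Q, A, hp⟩ := exists_gridParams (K * C)
  let e := Fintype.equivFin (Option (ZMod (Q + 1) × Fin d × SignType × (Fin d → ZMod (A + 1))))
  refine ⟨_, fun x => e (colour β Q A (WithLp.ofLp x)), ?_, ?_⟩
  · rintro ⟨a, v, c, hv, h⟩
    refine not_forall_colour_add_smul_eq hp.pos hp.period_pos (a := WithLp.ofLp a)
      (mt (WithLp.ofLp_eq_zero 2).1 hv) (e.symm c) fun n => ?_
    simpa using congrArg e.symm (h n)
  · intro T hT h3 hK c hc z hz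
    have hspread : HasSpreadAtMost (K * C) (WithLp.ofLp '' T) := by
      simpa using hK.image (f := WithLp.ofLp) (b := 1) (a := C)
        (fun x y => by simpa using (PiLp.lipschitzWith_ofLp 2 _).dist_le_mul x y) hC.le_mul_dist
    have := colour_eq_of_mem_convexHull hp (hT.image _)
      (by rwa [ncard_image_of_injective _ (WithLp.ofLp_injective 2)]) hspread (c₀ := e.symm c)
      (by rintro _ ⟨t, ht, rfl⟩; simp only [← hc t ht, Equiv.symm_apply_apply])
      (z := WithLp.ofLp z)
      ((WithLp.linearEquiv 2 ℝ (Fin d → ℝ)).toLinearMap.image_convexHull T ▸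
        mem_image_of_mem _ hz)
    simpa using congrArg e this

theorem no_am_similar_copy_nonextreme_general (d : ℕ) (S : Set (EuclideanSpace ℝ (Fin d)))
    (hfin : S.Finite) (hcard : 3 < S.ncard)
    (s₀ : EuclideanSpace ℝ (Fin d))
    (hconv : s₀ ∈ convexHull ℝ (S \ {s₀})) :
    ∃ (k : ℕ) (φ : EuclideanSpace ℝ (Fin d) → Fin k), APFree φ ∧
      ¬ ∃ f, IsSim f ∧ AlmostMono φ (f '' S) (f s₀) := by
  obtain ⟨K, hK⟩ := hfin.exists_hasSpreadAtMost
  obtain ⟨k, φ, hφ, hhull⟩ := exists_apFree_colour_eq_of_mem_convexHull d K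
  refine ⟨k, φ, hφ, ?_⟩
  rintro ⟨f, hf, ⟨c, hc⟩, hnot⟩
  have hcS : ∀ s ∈ S, s ≠ s₀ → φ (f s) = c := fun s hs hs₀ =>
    hc _ ⟨mem_image_of_mem f hs, fun h => hs₀ (hf.injective h)⟩
  have hc₀ : φ (f s₀) = c := by
    refine hhull _ (hfin.sdiff.image f) ?_ ((hK.mono sdiff_subset).image_of_isSim hf) c
      (by rintro _ ⟨s, hs, rfl⟩; exact hcS s hs.1 hs.2) _ (hf.mem_convexHull_image hconv)
    rw [ncard_image_of_injective _ hf.injective]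
    have := S.pred_ncard_le_ncard_sdiff_singleton s₀
    omega
  refine hnot ⟨c, ?_⟩
  rintro _ ⟨s, hs, rfl⟩
  by_cases h : s = s₀
  · rw [h, hc₀]
  · exact hcS s hs h

/-- If `S ⊆ ℝ^d` is finite with `|S| > 3` and `s₀ ∈ S` is not an
extreme point of `S`, then there is an AP-free finite colouring of `ℝ^d` with no
almost-monochromatic similar copy of `(S, s₀)`. -/
theorem no_am_similar_copy_nonextreme (d : ℕ) (S : Set (EuclideanSpace ℝ (Fin d)))
    (hfin : S.Finite) (hcard : 3 < S.ncard)
    (s₀ : EuclideanSpace ℝ (Fin d)) (hs₀ : s₀ ∈ S)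
    (hconv : s₀ ∈ convexHull ℝ (S \ {s₀})) :
    ∃ (k : ℕ) (φ : EuclideanSpace ℝ (Fin d) → Fin k), APFree φ ∧
      ¬ ∃ f, IsSim f ∧ AlmostMono φ (f '' S) (f s₀) :=
  no_am_similar_copy_nonextreme_general d S hfin hcard s₀ hconv
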